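/- arXiv:1804.06857 — 7 statements merged into one kernel-verified Lean document; each statement's English description precedes it below -/
import Mathlib

section
/- For any Hermitian matrix H with ground-state eigenvector φ₀ (having no zero entries), letting U = diag(φ₀/|φ₀|) (entrywise), the spectral gap of H is at most the spectral gap of the real part of U† H U, i.e., λ₁(H) − λ₀(H) ≤ λ₁(Re(U† H U)) − λ₀(Re(U† H U)). -/
open Matrix

noncomputable def specGap {n : ℕ} {𝕜 : Type*} [RCLike 𝕜] {A : Matrix (Fin n) (Fin n) 𝕜}
    (hA : A.IsHermitian) (hn : 2 ≤ n) : ℝ :=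
  (hA.eigenvalues ∘ Tuple.sort hA.eigenvalues) ⟨1, by omega⟩ -
    (hA.eigenvalues ∘ Tuple.sort hA.eigenvalues) ⟨0, by omega⟩


variable {n : ℕ} {𝕜 : Type*} [RCLike 𝕜] {A : Matrix (Fin n) (Fin n) 𝕜} (hA : A.IsHermitian)

noncomputable def coeff (hA : A.IsHermitian) (y : Fin n → 𝕜) (i : Fin n) : 𝕜 :=
  star ⇑(hA.eigenvectorBasis i) ⬝ᵥ y

lemma coeff_eq_repr (y : Fin n → 𝕜) (i : Fin n) :
    coeff hA y i = (hA.eigenvectorBasis).repr ((WithLp.equiv 2 _).symm y) i := by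
  rw [OrthonormalBasis.repr_apply_apply, EuclideanSpace.inner_eq_star_dotProduct]
  simp [coeff, dotProduct_comm]

lemma coeff_mulVec (y : Fin n → 𝕜) (i : Fin n) :
    coeff hA (A *ᵥ y) i = (hA.eigenvalues i : 𝕜) * coeff hA y i := by
  unfold coeff
  rw [dotProduct_mulVec]
  have h1 : star ⇑(hA.eigenvectorBasis i) ᵥ* A = star (A *ᵥ ⇑(hA.eigenvectorBasis i)) := by
    rw [star_mulVec, hA.eq]
  rw [h1, hA.mulVec_eigenvectorBasis]
  have h2 : star (hA.eigenvalues i • ⇑(hA.eigenvectorBasis i))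
      = (hA.eigenvalues i : 𝕜) • star ⇑(hA.eigenvectorBasis i) := by
    ext j
    simp [RCLike.star_def, RCLike.real_smul_eq_coe_mul, _root_.map_mul, mul_comm]
  rw [h2, smul_dotProduct, smul_eq_mul]

lemma normsq_eq_sum (y : Fin n → 𝕜) :
    RCLike.re (star y ⬝ᵥ y) = ∑ i, ‖coeff hA y i‖ ^ 2 := by
  have h0 : star y ⬝ᵥ y = inner 𝕜 ((WithLp.equiv 2 _).symm y : EuclideanSpace 𝕜 (Fin n)) ((WithLp.equiv 2 _).symm y) := by
    rw [EuclideanSpace.inner_eq_star_dotProduct, dotProduct_comm]; simp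
  rw [h0, ← (hA.eigenvectorBasis).repr.inner_map_map, PiLp.inner_apply, map_sum]
  congr 1; ext i
  rw [RCLike.inner_apply', ← coeff_eq_repr, RCLike.conj_mul, ← RCLike.ofReal_pow, RCLike.ofReal_re]

lemma quad_eq_sum (y : Fin n → 𝕜) :
    RCLike.re (star y ⬝ᵥ (A *ᵥ y)) = ∑ i, hA.eigenvalues i * ‖coeff hA y i‖ ^ 2 := by
  have h0 : star y ⬝ᵥ (A *ᵥ y) = inner 𝕜 ((WithLp.equiv 2 _).symm y : EuclideanSpace 𝕜 (Fin n)) ((WithLp.equiv 2 _).symm (A *ᵥ y)) := by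
    rw [EuclideanSpace.inner_eq_star_dotProduct, dotProduct_comm]; simp
  rw [h0, ← (hA.eigenvectorBasis).repr.inner_map_map, PiLp.inner_apply, map_sum]
  congr 1; ext i
  rw [RCLike.inner_apply', ← coeff_eq_repr, ← coeff_eq_repr, coeff_mulVec]
  have : (starRingEnd 𝕜) (coeff hA y i) * ((hA.eigenvalues i : 𝕜) * coeff hA y i)
      = (hA.eigenvalues i : 𝕜) * ((starRingEnd 𝕜) (coeff hA y i) * coeff hA y i) := by ring
  rw [this, RCLike.conj_mul, ← RCLike.ofReal_pow, ← RCLike.ofReal_mul, RCLike.ofReal_re]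

lemma key_lower (y : Fin n → 𝕜) (c : ℝ) (h : ∀ i, coeff hA y i ≠ 0 → c ≤ hA.eigenvalues i) :
    c * RCLike.re (star y ⬝ᵥ y) ≤ RCLike.re (star y ⬝ᵥ (A *ᵥ y)) := by
  rw [normsq_eq_sum hA, quad_eq_sum hA, Finset.mul_sum]
  refine Finset.sum_le_sum fun i _ => ?_
  by_cases hc : coeff hA y i = 0
  · simp [hc]
  · exact mul_le_mul_of_nonneg_right (h i hc) (by positivity)

lemma key_upper (y : Fin n → 𝕜) (c : ℝ) (h : ∀ i, coeff hA y i ≠ 0 → hA.eigenvalues i ≤ c) :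
    RCLike.re (star y ⬝ᵥ (A *ᵥ y)) ≤ c * RCLike.re (star y ⬝ᵥ y) := by
  rw [normsq_eq_sum hA, quad_eq_sum hA, Finset.mul_sum]
  refine Finset.sum_le_sum fun i _ => ?_
  by_cases hc : coeff hA y i = 0
  · simp [hc]
  · exact mul_le_mul_of_nonneg_right (h i hc) (by positivity)

lemma dot_self_re (y : Fin n → 𝕜) : RCLike.re (star y ⬝ᵥ y) = ∑ i, ‖y i‖ ^ 2 := by
  rw [dotProduct, map_sum]
  congr 1; ext i
  rw [Pi.star_apply, RCLike.star_def, RCLike.conj_mul, ← RCLike.ofReal_pow, RCLike.ofReal_re]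

lemma dot_self_pos {y : Fin n → 𝕜} (hy : y ≠ 0) : 0 < RCLike.re (star y ⬝ᵥ y) := by
  rw [dot_self_re]
  obtain ⟨i, hi⟩ : ∃ i, y i ≠ 0 := by
    by_contra h; push_neg at h; exact hy (funext h)
  exact Finset.sum_pos' (fun j _ => by positivity) ⟨i, Finset.mem_univ _, pow_pos (norm_pos_iff.2 hi) 2⟩

lemma coeff_basis (i j : Fin n) :
    coeff hA ⇑(hA.eigenvectorBasis j) i = if i = j then 1 else 0 := by
  have := hA.eigenvectorBasis.orthonormal
  rw [orthonormal_iff_ite] at this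
  rw [coeff, dotProduct_comm, ← EuclideanSpace.inner_eq_star_dotProduct]
  exact this i j

lemma coeff_eq_zero_of_ne {φ : Fin n → 𝕜} (r : ℝ) (hφ : A *ᵥ φ = (r : 𝕜) • φ) (i : Fin n)
    (hne : hA.eigenvalues i ≠ r) : coeff hA φ i = 0 := by
  have h1 := coeff_mulVec hA φ i
  rw [hφ] at h1
  have h2 : coeff hA ((r : 𝕜) • φ) i = (r : 𝕜) * coeff hA φ i := by
    simp [coeff, dotProduct_smul, smul_eq_mul, RCLike.real_smul_eq_coe_mul]
  rw [h2] at h1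
  have h3 : ((hA.eigenvalues i : 𝕜) - (r : 𝕜)) * coeff hA φ i = 0 := by
    rw [sub_mul, h1]; ring
  rcases mul_eq_zero.1 h3 with h | h
  · exact absurd (RCLike.ofReal_inj.1 (by linear_combination h)) hne
  · exact h

lemma eq_smul_basis {φ : Fin n → 𝕜} (i0 : Fin n) (h : ∀ j, j ≠ i0 → coeff hA φ j = 0) :
    φ = coeff hA φ i0 • ⇑(hA.eigenvectorBasis i0) := by
  set y : Fin n → 𝕜 := φ - coeff hA φ i0 • ⇑(hA.eigenvectorBasis i0) with hy
  have hcy : ∀ j, coeff hA y j = 0 := by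
    intro j
    have : coeff hA y j = coeff hA φ j - coeff hA φ i0 * coeff hA ⇑(hA.eigenvectorBasis i0) j := by
      simp [coeff, hy, dotProduct_sub, dotProduct_smul, smul_eq_mul]
    rw [this, coeff_basis]
    by_cases hj : j = i0
    · simp [hj]
    · simp [hj, h j hj]
  have h0 : RCLike.re (star y ⬝ᵥ y) = 0 := by
    rw [normsq_eq_sum hA]
    simp [hcy]
  have : y = 0 := by
    by_contra hne
    exact absurd h0 (ne_of_gt (dot_self_pos hne))
  have := sub_eq_zero.1 this
  linear_combination (norm := module) this

lemma sorted_zero_le (f : Fin n → ℝ) (hn : 2 ≤ n) (i : Fin n) :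
    (f ∘ Tuple.sort f) ⟨0, by omega⟩ ≤ f i := by
  have hm := Tuple.monotone_sort f
  have : f i = (f ∘ Tuple.sort f) ((Tuple.sort f).symm i) := by simp
  rw [this]
  exact hm (by exact Fin.mk_le_of_le_val (Nat.zero_le _))

lemma re_dot_real {n : ℕ} (N : Matrix (Fin n) (Fin n) ℂ) (x : Fin n → ℝ) :
    Complex.re ((star (fun i => (x i : ℂ))) ⬝ᵥ (N *ᵥ (fun i => (x i : ℂ)))) =
      x ⬝ᵥ ((N.map Complex.re) *ᵥ x) := by
  simp only [dotProduct, mulVec, Pi.star_apply, RCLike.star_def, Complex.conj_ofReal,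
    Matrix.map_apply, Complex.re_sum, Finset.mul_sum]
  refine Finset.sum_congr rfl fun i _ => Finset.sum_congr rfl fun j _ => ?_
  simp [Complex.mul_re]

set_option maxHeartbeats 1000000 in
theorem statement0 {n : ℕ} (hn : 2 ≤ n) {H : Matrix (Fin n) (Fin n) ℂ} (hH : H.IsHermitian)
    (φ : Fin n → ℂ) (hφ : ∀ i, φ i ≠ 0)
    (hgs : H.mulVec φ =
      (((hH.eigenvalues ∘ Tuple.sort hH.eigenvalues) ⟨0, by omega⟩ : ℝ) : ℂ) • φ)
    (U : Matrix (Fin n) (Fin n) ℂ) (hU : U = Matrix.diagonal (fun i => φ i / (‖φ i‖ : ℂ)))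
    (M : Matrix (Fin n) (Fin n) ℝ) (hMdef : M = (Uᴴ * H * U).map Complex.re)
    (hM : M.IsHermitian) :
    specGap hH hn ≤ specGap hM hn := by
  classical
  obtain ⟨lam0, hlam0⟩ : ∃ v : ℝ, v = hH.eigenvalues (Tuple.sort hH.eigenvalues ⟨0, by omega⟩) :=
    ⟨_, rfl⟩
  obtain ⟨lam1, hlam1⟩ : ∃ v : ℝ, v = hH.eigenvalues (Tuple.sort hH.eigenvalues ⟨1, by omega⟩) :=
    ⟨_, rfl⟩
  obtain ⟨m0, hm0⟩ : ∃ v : ℝ, v = hM.eigenvalues (Tuple.sort hM.eigenvalues ⟨0, by omega⟩) :=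
    ⟨_, rfl⟩
  obtain ⟨m1, hm1⟩ : ∃ v : ℝ, v = hM.eigenvalues (Tuple.sort hM.eigenvalues ⟨1, by omega⟩) :=
    ⟨_, rfl⟩
  have hgoal : specGap hH hn = lam1 - lam0 := by rw [hlam0, hlam1]; rfl
  have hgoalM : specGap hM hn = m1 - m0 := by rw [hm0, hm1]; rfl
  rw [hgoal, hgoalM]
  -- the positive real vector ψ
  obtain ⟨ψ, hψ⟩ : ∃ v : Fin n → ℝ, v = fun i => ‖φ i‖ := ⟨_, rfl⟩
  obtain ⟨ψc, hψc⟩ : ∃ v : Fin n → ℂ, v = fun i => (‖φ i‖ : ℂ) := ⟨_, rfl⟩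
  have hψne : ψ ≠ 0 := by
    intro h
    have := congrFun h ⟨0, by omega⟩
    rw [hψ] at this
    simp only [Pi.zero_apply, norm_eq_zero] at this
    exact hφ _ this
  have hnorm_ne : ∀ i, (‖φ i‖ : ℂ) ≠ 0 := by
    intro i
    simpa using (norm_ne_zero_iff.2 (hφ i))
  have hUψ : U *ᵥ ψc = φ := by
    funext i
    rw [hU, hψc]
    simp only [mulVec_diagonal]
    exact div_mul_cancel₀ (φ i) (hnorm_ne i)
  have hUstarφ : Uᴴ *ᵥ φ = ψc := by
    funext i
    rw [hU, hψc, diagonal_conjTranspose]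
    simp only [mulVec_diagonal, Pi.star_apply]
    rw [star_div₀, Complex.star_def, Complex.conj_ofReal, div_mul_eq_mul_div,
      mul_comm, Complex.mul_conj']
    rw [sq]
    exact mul_div_cancel_right₀ _ (hnorm_ne i)
  have hgs' : H *ᵥ φ = (lam0 : ℂ) • φ := by rw [hlam0]; exact hgs
  have hN : (Uᴴ * H * U) *ᵥ ψc = (lam0 : ℂ) • ψc := by
    rw [← mulVec_mulVec, ← mulVec_mulVec, hUψ, hgs', mulVec_smul, hUstarφ]
  have hMψ : M *ᵥ ψ = lam0 • ψ := by
    funext i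
    have h1 : (M *ᵥ ψ) i = Complex.re (((Uᴴ * H * U) *ᵥ ψc) i) := by
      rw [hMdef]
      simp only [mulVec, dotProduct, Matrix.map_apply, Complex.re_sum]
      refine Finset.sum_congr rfl fun j _ => ?_
      rw [hψ, hψc]
      simp [Complex.mul_re]
    rw [h1, hN]
    rw [hψ, hψc]
    simp only [Pi.smul_apply, smul_eq_mul, ← Complex.ofReal_mul, Complex.ofReal_re]
  -- m0 ≤ lam0
  have hstarψ : star ψ = ψ := by funext i; simp
  have hSψ : (0:ℝ) < ψ ⬝ᵥ ψ := by
    have := dot_self_pos (𝕜 := ℝ) hψne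
    simpa [hstarψ] using this
  have hm0le : m0 ≤ lam0 := by
    have hk := key_lower hM ψ m0 (fun i _ => by
      rw [hm0]; exact sorted_zero_le hM.eigenvalues hn i)
    rw [hstarψ] at hk
    rw [hMψ] at hk
    simp only [RCLike.re_to_real] at hk
    have h2 : ψ ⬝ᵥ (lam0 • ψ) = lam0 * (ψ ⬝ᵥ ψ) := by
      simp [dotProduct_smul]
    rw [h2] at hk
    exact le_of_mul_le_mul_right (by linarith) hSψ
  -- monotone facts
  have hmonoH := Tuple.monotone_sort hH.eigenvalues
  have hmonoM := Tuple.monotone_sort hM.eigenvalues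
  have hfin01 : (⟨0, by omega⟩ : Fin n) ≤ ⟨1, by omega⟩ := by simp
  have hm01 : m0 ≤ m1 := by rw [hm0, hm1]; exact hmonoM hfin01
  have hl01 : lam0 ≤ lam1 := by rw [hlam0, hlam1]; exact hmonoH hfin01
  by_cases hcase : lam1 ≤ lam0
  · linarith
  push_neg at hcase
  -- λ0 < λ1 case
  obtain ⟨istar, histar⟩ : ∃ v : Fin n, v = Tuple.sort hH.eigenvalues ⟨0, by omega⟩ := ⟨_, rfl⟩
  have hgt : ∀ i, i ≠ istar → lam1 ≤ hH.eigenvalues i := by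
    intro i hi
    obtain ⟨j, hj⟩ : ∃ v : Fin n, v = (Tuple.sort hH.eigenvalues).symm i := ⟨_, rfl⟩
    have hij : i = Tuple.sort hH.eigenvalues j := by rw [hj]; simp
    have hjne : j ≠ ⟨0, by omega⟩ := by
      intro h
      apply hi
      rw [histar, ← h, hij]
    have hj1 : (⟨1, by omega⟩ : Fin n) ≤ j := by
      have : (0:ℕ) < j.val := by
        rcases Nat.eq_zero_or_pos j.val with h | h
        · exact absurd (Fin.ext h) hjne
        · exact h
      exact Fin.mk_le_of_le_val this
    have h2 := hmonoH hj1
    rw [hij, hlam1]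
    exact h2
  have hcoeffφ : ∀ i, i ≠ istar → coeff hH φ i = 0 := by
    intro i hi
    exact coeff_eq_zero_of_ne hH lam0 hgs' i (by
      have := hgt i hi; intro h; rw [h] at this; linarith)
  have hφexp : φ = coeff hH φ istar • ⇑(hH.eigenvectorBasis istar) :=
    eq_smul_basis hH istar hcoeffφ
  have hcstar : coeff hH φ istar ≠ 0 := by
    intro h
    rw [h, zero_smul] at hφexp
    exact hφ ⟨0, by omega⟩ (by rw [hφexp]; rfl)
  -- M side construction
  obtain ⟨i0, hi0⟩ : ∃ v : Fin n, v = Tuple.sort hM.eigenvalues ⟨0, by omega⟩ := ⟨_, rfl⟩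
  obtain ⟨i1, hi1⟩ : ∃ v : Fin n, v = Tuple.sort hM.eigenvalues ⟨1, by omega⟩ := ⟨_, rfl⟩
  have hμi0 : hM.eigenvalues i0 = m0 := by rw [hi0, hm0]
  have hμi1 : hM.eigenvalues i1 = m1 := by rw [hi1, hm1]
  have hne01 : i0 ≠ i1 := by
    rw [hi0, hi1]
    intro h
    have := (Tuple.sort hM.eigenvalues).injective h
    simp at this
  obtain ⟨x, hx0, hxc, hxψ⟩ : ∃ x : Fin n → ℝ, x ≠ 0 ∧
      (∀ k, k ≠ i0 → k ≠ i1 → coeff hM x k = 0) ∧ ψ ⬝ᵥ x = 0 := by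
    obtain ⟨p0, hp0def⟩ : ∃ v : ℝ, v = coeff hM ψ i0 := ⟨_, rfl⟩
    obtain ⟨p1, hp1def⟩ : ∃ v : ℝ, v = coeff hM ψ i1 := ⟨_, rfl⟩
    have hdotB : ∀ k, ψ ⬝ᵥ ⇑(hM.eigenvectorBasis k) = coeff hM ψ k := by
      intro k
      rw [coeff, dotProduct_comm]
      simp
    have hsub : ∀ (z w : Fin n → ℝ) (k : Fin n),
        coeff hM (z - w) k = coeff hM z k - coeff hM w k := by
      intro z w k; simp [coeff, dotProduct_sub]
    have hsmul : ∀ (c : ℝ) (z : Fin n → ℝ) (k : Fin n),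
        coeff hM (c • z) k = c * coeff hM z k := by
      intro c z k; simp [coeff, dotProduct_smul]
    by_cases hp0 : p0 = 0
    · refine ⟨⇑(hM.eigenvectorBasis i0), ?_, ?_, ?_⟩
      · intro h
        have h2 : hM.eigenvectorBasis i0 = 0 := by
          apply (WithLp.equiv 2 _).injective
          simpa using h
        exact hM.eigenvectorBasis.orthonormal.ne_zero i0 h2
      · intro k hk _
        rw [coeff_basis]
        simp [hk]
      · rw [hdotB, ← hp0def, hp0]
    · refine ⟨p1 • ⇑(hM.eigenvectorBasis i0) - p0 • ⇑(hM.eigenvectorBasis i1), ?_, ?_, ?_⟩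
      · intro h
        have hc : coeff hM (p1 • ⇑(hM.eigenvectorBasis i0) - p0 • ⇑(hM.eigenvectorBasis i1)) i1 = -p0 := by
          rw [hsub, hsmul, hsmul, coeff_basis, coeff_basis]
          simp [hne01, Ne.symm hne01]
        rw [h] at hc
        simp only [coeff, dotProduct_zero] at hc
        exact hp0 (by linarith)
      · intro k hk hk'
        rw [hsub, hsmul, hsmul, coeff_basis, coeff_basis]
        simp [hk, hk']
      · rw [dotProduct_sub, dotProduct_smul, dotProduct_smul, hdotB, hdotB, ← hp0def, ← hp1def]
        simp [mul_comm]
  -- quadratic form bounds for x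
  have hstarx : star x = x := by funext i; simp
  have hSx : (0:ℝ) < x ⬝ᵥ x := by
    have := dot_self_pos (𝕜 := ℝ) hx0
    simpa [hstarx] using this
  have hupper : x ⬝ᵥ (M *ᵥ x) ≤ m1 * (x ⬝ᵥ x) := by
    have harg : ∀ k, coeff hM x k ≠ 0 → hM.eigenvalues k ≤ m1 := by
      intro k hk
      by_cases h0 : k = i0
      · rw [h0, hμi0]; exact hm01
      · by_cases h1 : k = i1
        · rw [h1, hμi1]
        · exact absurd (hxc k h0 h1) hk
    have hk := key_upper hM x m1 harg
    rw [hstarx] at hk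
    simpa using hk
  -- transfer to H via y = U xc
  obtain ⟨xc, hxcdef⟩ : ∃ v : Fin n → ℂ, v = fun i => (x i : ℂ) := ⟨_, rfl⟩
  obtain ⟨y, hy⟩ : ∃ v : Fin n → ℂ, v = U *ᵥ xc := ⟨_, rfl⟩
  have hyq : star y ⬝ᵥ (H *ᵥ y) = star xc ⬝ᵥ ((Uᴴ * H * U) *ᵥ xc) := by
    rw [hy, star_mulVec, mulVec_mulVec, ← dotProduct_mulVec, mulVec_mulVec, Matrix.mul_assoc]
  have hone : ∀ i, star (φ i / (‖φ i‖:ℂ)) * (φ i / (‖φ i‖:ℂ)) = 1 := by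
    intro i
    rw [star_div₀, Complex.star_def, Complex.conj_ofReal, div_mul_div_comm,
      mul_comm ((starRingEnd ℂ) (φ i)) (φ i), Complex.mul_conj']
    rw [sq, ← Complex.ofReal_mul, div_self]
    simpa using (norm_ne_zero_iff.2 (hφ i))
  have hUU : Uᴴ * U = 1 := by
    rw [hU, diagonal_conjTranspose, diagonal_mul_diagonal]
    ext i j
    by_cases hij : i = j
    · subst hij
      simp only [Matrix.diagonal_apply_eq, Pi.mul_apply, Pi.star_apply, Matrix.one_apply_eq]
      exact hone i
    · rw [Matrix.diagonal_apply_ne _ hij, Matrix.one_apply_ne hij]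
  have hyy : Complex.re (star y ⬝ᵥ y) = x ⬝ᵥ x := by
    have h1 : star y ⬝ᵥ y = star xc ⬝ᵥ ((Uᴴ * U) *ᵥ xc) := by
      rw [hy, star_mulVec, ← dotProduct_mulVec, mulVec_mulVec]
    rw [h1, hUU, one_mulVec]
    rw [hxcdef]
    simp only [dotProduct, Pi.star_apply, RCLike.star_def, Complex.conj_ofReal, Complex.re_sum]
    refine Finset.sum_congr rfl fun i _ => ?_
    simp [Complex.mul_re]
  have hyH : Complex.re (star y ⬝ᵥ (H *ᵥ y)) = x ⬝ᵥ (M *ᵥ x) := by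
    rw [hyq, hMdef, hxcdef]
    exact re_dot_real (Uᴴ * H * U) x
  -- orthogonality of y to φ
  have hφy : star φ ⬝ᵥ y = 0 := by
    have h1 : star φ ⬝ᵥ y = ∑ i, (‖φ i‖ : ℂ) * (x i : ℂ) := by
      rw [hy, hU, hxcdef]
      simp only [dotProduct, mulVec_diagonal, Pi.star_apply, RCLike.star_def]
      refine Finset.sum_congr rfl fun i _ => ?_
      have key : (starRingEnd ℂ) (φ i) * (φ i / (‖φ i‖:ℂ)) = (‖φ i‖:ℂ) := by
        rw [← mul_div_assoc, mul_comm, Complex.mul_conj', sq]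
        exact mul_div_cancel_right₀ _ (hnorm_ne i)
      rw [← mul_assoc, key]
    rw [h1]
    have h2 : ∑ i, (‖φ i‖ : ℂ) * (x i : ℂ) = ((ψ ⬝ᵥ x : ℝ) : ℂ) := by
      rw [dotProduct, hψ]
      push_cast
      rfl
    rw [h2, hxψ]
    simp
  have hcy : coeff hH y istar = 0 := by
    have h1 : star φ ⬝ᵥ y = (starRingEnd ℂ) (coeff hH φ istar) * coeff hH y istar := by
      conv_lhs => rw [hφexp]
      rw [star_smul, smul_dotProduct]
      rfl
    rw [hφy] at h1
    rcases mul_eq_zero.1 h1.symm with h | h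
    · exact absurd (by simpa using h) hcstar
    · exact h
  -- lower bound for y
  have hlow := key_lower hH y lam1 (fun i hi => by
    by_cases h : i = istar
    · rw [h] at hi; exact absurd hcy hi
    · exact hgt i h)
  simp only [RCLike.re_to_complex] at hlow
  rw [hyy, hyH] at hlow
  have hlam1m1 : lam1 ≤ m1 := by
    have h3 : lam1 * (x ⬝ᵥ x) ≤ m1 * (x ⬝ᵥ x) := le_trans hlow hupper
    exact le_of_mul_le_mul_right h3 hSx
  linarith
end

section
/- For a Hermitian matrix H with ground-state φ₀ having nonzero entries, and U = diag(φ₀/|φ₀|), the lowest eigenvalue satisfies λ₀(H) = inf over nonnegative real vectors f ≠ 0 of ⟨f, Re(U† H U) f⟩ / ⟨f, f⟩. -/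
open Matrix

theorem rayleigh_lower {n : ℕ} (hn : 0 < n) {H : Matrix (Fin n) (Fin n) ℂ} (hH : H.IsHermitian)
    (v : Fin n → ℂ) :
    (⨅ i, hH.eigenvalues i) * (star v ⬝ᵥ v).re ≤ (star v ⬝ᵥ H *ᵥ v).re := by
  have : Nonempty (Fin n) := ⟨⟨0, hn⟩⟩
  set B : Matrix (Fin n) (Fin n) ℂ := (hH.eigenvectorUnitary : Matrix (Fin n) (Fin n) ℂ) with hB
  set w : Fin n → ℂ := star B *ᵥ v with hw
  have hBw : ∀ y : Fin n → ℂ, star v ⬝ᵥ (B *ᵥ y) = star w ⬝ᵥ y := by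
    intro y
    rw [dotProduct_mulVec, hw, star_mulVec]
    simp [star_eq_conjTranspose, conjTranspose_conjTranspose]
  have h1 : star v ⬝ᵥ H *ᵥ v = ((∑ i, hH.eigenvalues i * Complex.normSq (w i) : ℝ) : ℂ) := by
    conv_lhs => rw [hH.spectral_theorem, Unitary.conjStarAlgAut_apply]
    rw [← mulVec_mulVec, ← mulVec_mulVec, hBw]
    simp only [mulVec_diagonal, dotProduct, Pi.star_apply]
    push_cast
    congr 1
    ext i
    simp only [Function.comp_apply]
    rw [← hw]
    rw [show ((Complex.normSq (w i) : ℝ) : ℂ) = w i * star (w i) by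
      rw [Complex.star_def]; exact (Complex.mul_conj _).symm]
    rw [show (RCLike.ofReal (hH.eigenvalues i) : ℂ) = ((hH.eigenvalues i : ℝ) : ℂ) from rfl]
    ring
  have hBB : B * star B = 1 := (Matrix.mem_unitaryGroup_iff).mp hH.eigenvectorUnitary.2
  have h2 : star v ⬝ᵥ v = ((∑ i, Complex.normSq (w i) : ℝ) : ℂ) := by
    have hv : B *ᵥ w = v := by rw [hw, mulVec_mulVec, hBB, one_mulVec]
    have : star v ⬝ᵥ v = star w ⬝ᵥ w := by rw [← hBw w, hv]
    rw [this]
    simp only [dotProduct, Pi.star_apply]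
    push_cast
    congr 1
    ext i
    rw [mul_comm]; exact Complex.mul_conj _
  rw [h1, h2, Complex.ofReal_re, Complex.ofReal_re, Finset.mul_sum]
  exact Finset.sum_le_sum fun i _ => mul_le_mul_of_nonneg_right
    (ciInf_le (Finite.bddBelow_range _) i) (Complex.normSq_nonneg _)


theorem statement1 {n : ℕ} (hn : 0 < n) {H : Matrix (Fin n) (Fin n) ℂ} (hH : H.IsHermitian)
    (φ : Fin n → ℂ) (hφ : ∀ i, φ i ≠ 0) (lam0 : ℝ) (hlam0 : lam0 = ⨅ i, hH.eigenvalues i)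
    (hgs : H.mulVec φ = (lam0 : ℂ) • φ)
    (U : Matrix (Fin n) (Fin n) ℂ) (hU : U = Matrix.diagonal (fun i => φ i / (‖φ i‖ : ℂ)))
    (M : Matrix (Fin n) (Fin n) ℝ) (hMdef : M = (Uᴴ * H * U).map Complex.re) :
    lam0 = sInf {r : ℝ | ∃ f : Fin n → ℝ, (∀ i, 0 ≤ f i) ∧ f ≠ 0 ∧
      r = (f ⬝ᵥ M.mulVec f) / (f ⬝ᵥ f)} := by
  classical
  have hne : Nonempty (Fin n) := ⟨⟨0, hn⟩⟩
  have hnorm_ne : ∀ i, ((‖φ i‖ : ℝ) : ℂ) ≠ 0 := fun i => by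
    simp [norm_eq_zero, hφ i]
  -- the complexification of a real vector
  set fc : (Fin n → ℝ) → (Fin n → ℂ) := fun f i => (f i : ℂ) with hfc
  -- key algebraic identities
  have hUv : ∀ f : Fin n → ℝ, U *ᵥ fc f = fun i => (φ i / (‖φ i‖ : ℂ)) * (f i : ℂ) := by
    intro f; ext i; simp [hU, mulVec_diagonal, hfc]
  have hden : ∀ f : Fin n → ℝ,
      star (U *ᵥ fc f) ⬝ᵥ (U *ᵥ fc f) = ((f ⬝ᵥ f : ℝ) : ℂ) := by
    intro f
    rw [hUv f]
    simp only [dotProduct, Pi.star_apply, Complex.star_def]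
    push_cast
    congr 1; ext i
    rw [mul_comm, Complex.mul_conj]
    have h1 : Complex.normSq ((φ i / (‖φ i‖ : ℂ)) * (f i : ℂ)) = f i * f i := by
      have habs : ‖φ i‖ ≠ 0 := norm_ne_zero_iff.mpr (hφ i)
      simp only [Complex.normSq_mul, Complex.normSq_div, Complex.normSq_ofReal]
      rw [Complex.normSq_eq_norm_sq (φ i)]
      field_simp
    rw [h1]; push_cast; ring
  have hnum : ∀ f : Fin n → ℝ,
      f ⬝ᵥ M *ᵥ f = (star (U *ᵥ fc f) ⬝ᵥ (H *ᵥ (U *ᵥ fc f))).re := by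
    intro f
    have e1 : star (fc f) ⬝ᵥ ((Uᴴ * H * U) *ᵥ fc f)
        = star (U *ᵥ fc f) ⬝ᵥ (H *ᵥ (U *ᵥ fc f)) := by
      rw [← mulVec_mulVec, ← mulVec_mulVec, dotProduct_mulVec, ← star_mulVec]
    rw [← e1]
    simp only [hfc, dotProduct, mulVec, dotProduct, hMdef, Matrix.map_apply, Complex.re_sum,
      Pi.star_apply, Complex.star_def, Complex.conj_ofReal, Complex.re_ofReal_mul,
      Complex.mul_re, Complex.ofReal_re, Complex.ofReal_im, mul_zero, sub_zero, zero_mul]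
  have hpos : ∀ f : Fin n → ℝ, f ≠ 0 → 0 < f ⬝ᵥ f := by
    intro f hf
    have hex : ∃ i, f i ≠ 0 := by
      by_contra h; push_neg at h; exact hf (funext h)
    obtain ⟨i, hi⟩ := hex
    exact Finset.sum_pos' (fun j _ => mul_self_nonneg _)
      ⟨i, Finset.mem_univ i, mul_self_pos.mpr hi⟩
  -- membership: f = ‖φ‖
  set f0 : Fin n → ℝ := fun i => ‖φ i‖ with hf0
  have hf0ne : f0 ≠ 0 := by
    intro h
    have := congrFun h ⟨0, hn⟩
    exact hφ _ (norm_eq_zero.mp this)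
  have hUf0 : U *ᵥ fc f0 = φ := by
    rw [hUv f0]; ext i
    exact div_mul_cancel₀ (φ i) (hnorm_ne i)
  have hmem : lam0 ∈ {r : ℝ | ∃ f : Fin n → ℝ, (∀ i, 0 ≤ f i) ∧ f ≠ 0 ∧
      r = (f ⬝ᵥ M.mulVec f) / (f ⬝ᵥ f)} := by
    refine ⟨f0, fun i => norm_nonneg _, hf0ne, ?_⟩
    have hD : (0:ℝ) < f0 ⬝ᵥ f0 := hpos f0 hf0ne
    have hN : f0 ⬝ᵥ M *ᵥ f0 = lam0 * (f0 ⬝ᵥ f0) := by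
      rw [hnum f0, hUf0, hgs, dotProduct_smul, smul_eq_mul]
      rw [show star φ ⬝ᵥ φ = ((f0 ⬝ᵥ f0 : ℝ) : ℂ) by rw [← hUf0, hden f0]]
      simp [Complex.ofReal_mul]
    rw [hN, mul_div_assoc, div_self hD.ne', mul_one]
  have hlb : ∀ r ∈ {r : ℝ | ∃ f : Fin n → ℝ, (∀ i, 0 ≤ f i) ∧ f ≠ 0 ∧
      r = (f ⬝ᵥ M.mulVec f) / (f ⬝ᵥ f)}, lam0 ≤ r := by
    rintro r ⟨f, -, hfne, rfl⟩
    have hD : (0:ℝ) < f ⬝ᵥ f := hpos f hfne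
    have hkey := rayleigh_lower hn hH (U *ᵥ fc f)
    rw [← hlam0, hden f, Complex.ofReal_re] at hkey
    rw [le_div_iff₀ hD]
    calc lam0 * (f ⬝ᵥ f) ≤ (star (U *ᵥ fc f) ⬝ᵥ (H *ᵥ (U *ᵥ fc f))).re := hkey
      _ = f ⬝ᵥ M *ᵥ f := (hnum f).symm
  exact le_antisymm (le_csInf ⟨lam0, hmem⟩ hlb) (csInf_le ⟨lam0, hlb⟩ hmem)
end

section
/- Ground-state transformation identity: Let G = (V, E) be a finite weighted graph with symmetric weights w, let q : V → ℝ with q > 0, let W : V → ℝ, and suppose φ : V → ℝ satisfies (λ₀ − W(u)) q(u) φ(u) = Σ_{v} w(u,v)[φ(u) − φ(v)] for all u. Then for every g : V → ℝ, Σ_{{u,v}∈E} w(u,v)[g(u)φ(u) − g(v)φ(v)]² = Σ_u (λ₀ − W(u)) q(u) g(u)² φ(u)² + Σ_{{u,v}∈E} w(u,v)[g(u) − g(v)]² φ(u)φ(v). -/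
/-!
Expand `w (g u φ u - g v φ v)²` as
`w g_u² φ_u (φ_u - φ_v) + w g_v² φ_v (φ_v - φ_u) + w (g_u - g_v)² φ_u φ_v`.
By symmetry of `w` the first two terms contribute equally to the double sum, and summing the
first over `v` produces `g_u² φ_u · (Lφ)(u)`, where `(Lφ)(u) = ∑ v, w u v (φ u - φ v)` is the
graph Laplacian; the eigenvalue equation replaces `Lφ` by `(λ₀ - W) q φ`.
-/

open Finset

section GroundState

variable {V R : Type*} [Fintype V] [CommRing R] {w : V → V → R}

theorem sum_sum_mul_comm_of_symm (hw : ∀ u v, w u v = w v u) (F : V → V → R) :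
    ∑ u, ∑ v, w u v * F v u = ∑ u, ∑ v, w u v * F u v := by
  rw [sum_comm]
  exact sum_congr rfl fun u _ => sum_congr rfl fun v _ => by rw [hw]

theorem sum_sum_mul_sq_sub_mul_eq (hw : ∀ u v, w u v = w v u) (g φ : V → R) :
    ∑ u, ∑ v, w u v * (g u * φ u - g v * φ v) ^ 2 =
      2 * ∑ u, g u ^ 2 * φ u * ∑ v, w u v * (φ u - φ v) +
        ∑ u, ∑ v, w u v * (g u - g v) ^ 2 * (φ u * φ v) := by
  set F : V → V → R := fun u v => g u ^ 2 * φ u * (φ u - φ v)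
  have pointwise : ∀ u v, w u v * (g u * φ u - g v * φ v) ^ 2 =
      w u v * F u v + w u v * F v u + w u v * (g u - g v) ^ 2 * (φ u * φ v) := by
    intro u v; simp only [F]; ring
  have laplacian : ∑ u, ∑ v, w u v * F u v = ∑ u, g u ^ 2 * φ u * ∑ v, w u v * (φ u - φ v) :=
    sum_congr rfl fun u _ => by
      rw [mul_sum]; exact sum_congr rfl fun v _ => by simp only [F]; ring
  simp only [pointwise, sum_add_distrib, sum_sum_mul_comm_of_symm hw F, laplacian]
  ring

end GroundState

theorem statement3_general {V : Type*} [Fintype V] (w : V → V → ℝ) (hw : ∀ u v, w u v = w v u)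
    (q : V → ℝ) (W : V → ℝ) (lam0 : ℝ) (φ : V → ℝ)
    (heig : ∀ u, (lam0 - W u) * q u * φ u = ∑ v, w u v * (φ u - φ v))
    (g : V → ℝ) :
    (1/2) * ∑ u, ∑ v, w u v * (g u * φ u - g v * φ v)^2 =
      (∑ u, (lam0 - W u) * q u * g u ^2 * φ u ^2) +
        (1/2) * ∑ u, ∑ v, w u v * (g u - g v)^2 * (φ u * φ v) := by
  have potential : ∑ u, g u ^ 2 * φ u * ∑ v, w u v * (φ u - φ v) =
      ∑ u, (lam0 - W u) * q u * g u ^ 2 * φ u ^ 2 :=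
    sum_congr rfl fun u _ => by rw [← heig u]; ring
  rw [sum_sum_mul_sq_sub_mul_eq hw g φ, potential]
  ring

theorem statement3 {V : Type*} [Fintype V] (w : V → V → ℝ) (hw : ∀ u v, w u v = w v u)
    (q : V → ℝ) (hq : ∀ u, 0 < q u) (W : V → ℝ) (lam0 : ℝ) (φ : V → ℝ)
    (heig : ∀ u, (lam0 - W u) * q u * φ u = ∑ v, w u v * (φ u - φ v))
    (g : V → ℝ) :
    (1/2) * ∑ u, ∑ v, w u v * (g u * φ u - g v * φ v)^2 =
      (∑ u, (lam0 - W u) * q u * g u ^2 * φ u ^2) +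
        (1/2) * ∑ u, ∑ v, w u v * (g u - g v)^2 * (φ u * φ v) :=
  statement3_general w hw q W lam0 φ heig g
end

section
/- Test function computation for the Cheeger upper bound: For S ⊂ V nonempty and proper, define g(u) = vol(V∖S) for u ∈ S and g(u) = −vol(S) for u ∉ S, where vol(A) = Σ_{u∈A} q(u)φ(u)². Then Σ_u q(u) g(u) φ(u)² = 0, and the Rayleigh quotient [Σ_{{u,v}} w(u,v)φ(u)φ(v)(g(u)−g(v))²]/[Σ_u q(u) g(u)² φ(u)²] equals |∂S| (vol(S)+vol(V∖S))² / (vol(V∖S)² vol(S) + vol(S)² vol(V∖S)), which is at most 2 |∂S| / min(vol(S), vol(V∖S)). -/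
/-! The test function `g` takes the value `vol(Sᶜ)` on `S` and `-vol(S)` on `Sᶜ`, so its weighted mean
vanishes and both the energy and the weighted squared norm of `g` collapse to block sums: only the
edges across the cut contribute to the energy, each with weight `(vol S + vol Sᶜ)²`. The resulting
quotient equals `|∂S| (1 / vol S + 1 / vol Sᶜ)`, which is at most `2 |∂S| / min (vol S) (vol Sᶜ)`. -/

open Finset

section TwoValued

variable {V : Type*} [Fintype V] [DecidableEq V] (S : Finset V) {g : V → ℝ} {x y : ℝ}

theorem sum_of_eq_on_compl {β : Type*} [AddCommMonoid β] (hx : ∀ u ∈ S, g u = x)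
    (hy : ∀ u ∉ S, g u = y) (F : V → ℝ → β) :
    ∑ u, F u (g u) = ∑ u ∈ S, F u x + ∑ u ∈ Sᶜ, F u y := by
  rw [← sum_add_sum_compl S]
  congr 1
  · exact sum_congr rfl fun u hu => by rw [hx u hu]
  · exact sum_congr rfl fun u hu => by rw [hy u (mem_compl.mp hu)]

theorem sum_sum_mul_sub_sq_of_eq_on_compl (hx : ∀ u ∈ S, g u = x) (hy : ∀ u ∉ S, g u = y)
    (K : V → V → ℝ) (hK : ∀ u v, K u v = K v u) :
    ∑ u, ∑ v, K u v * (g u - g v) ^ 2 = 2 * (x - y) ^ 2 * ∑ u ∈ S, ∑ v ∈ Sᶜ, K u v := by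
  have inner : ∀ u, ∑ v, K u v * (g u - g v) ^ 2 =
      ∑ v ∈ S, K u v * (g u - x) ^ 2 + ∑ v ∈ Sᶜ, K u v * (g u - y) ^ 2 :=
    fun u => sum_of_eq_on_compl S hx hy fun v t => K u v * (g u - t) ^ 2
  rw [sum_congr rfl fun u _ => inner u,
    sum_of_eq_on_compl S hx hy fun u t =>
      ∑ v ∈ S, K u v * (t - x) ^ 2 + ∑ v ∈ Sᶜ, K u v * (t - y) ^ 2]
  have cross : ∑ u ∈ Sᶜ, ∑ v ∈ S, K u v = ∑ u ∈ S, ∑ v ∈ Sᶜ, K u v := by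
    rw [sum_comm]; simp only [hK]
  simp only [sub_self, ne_eq, OfNat.ofNat_ne_zero, not_false_eq_true, zero_pow, mul_zero,
    sum_const_zero, zero_add, add_zero, sub_sq_comm y x, ← sum_mul, cross]
  ring

end TwoValued

theorem mul_sq_add_div_le_two_mul_div_min {a b E : ℝ} (ha : 0 < a) (hb : 0 < b) (hE : 0 ≤ E) :
    E * (a + b) ^ 2 / (b ^ 2 * a + a ^ 2 * b) ≤ 2 * E / min a b := by
  have hm : 0 < min a b := lt_min ha hb
  have key : min a b * (a + b) ≤ 2 * (a * b) := by
    nlinarith [mul_le_mul_of_nonneg_right (min_le_left a b) hb.le,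
      mul_le_mul_of_nonneg_right (min_le_right a b) ha.le]
  rw [div_le_div_iff₀ (by positivity) hm]
  nlinarith [mul_le_mul_of_nonneg_left key (mul_nonneg hE (add_pos ha hb).le)]

theorem statement6 {V : Type*} [Fintype V] [DecidableEq V]
    (w : V → V → ℝ) (hw : ∀ u v, w u v = w v u) (hwpos : ∀ u v, 0 ≤ w u v)
    (q : V → ℝ) (hq : ∀ u, 0 < q u) (φ : V → ℝ) (hφ : ∀ u, 0 < φ u)
    (S : Finset V) (hS : S.Nonempty) (hS' : S ≠ Finset.univ)
    (g : V → ℝ)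
    (hg : g = fun u => if u ∈ S then (∑ v ∈ Sᶜ, q v * φ v ^2) else -(∑ v ∈ S, q v * φ v ^2)) :
    (∑ u, q u * g u * φ u ^2) = 0 ∧
    ((1/2) * ∑ u, ∑ v, w u v * φ u * φ v * (g u - g v)^2) / (∑ u, q u * g u ^2 * φ u ^2) =
      (∑ u ∈ S, ∑ v ∈ Sᶜ, w u v * φ u * φ v) *
        ((∑ u ∈ S, q u * φ u ^2) + (∑ u ∈ Sᶜ, q u * φ u ^2))^2 /
        ((∑ u ∈ Sᶜ, q u * φ u ^2)^2 * (∑ u ∈ S, q u * φ u ^2) +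
          (∑ u ∈ S, q u * φ u ^2)^2 * (∑ u ∈ Sᶜ, q u * φ u ^2)) ∧
    (∑ u ∈ S, ∑ v ∈ Sᶜ, w u v * φ u * φ v) *
        ((∑ u ∈ S, q u * φ u ^2) + (∑ u ∈ Sᶜ, q u * φ u ^2))^2 /
        ((∑ u ∈ Sᶜ, q u * φ u ^2)^2 * (∑ u ∈ S, q u * φ u ^2) +
          (∑ u ∈ S, q u * φ u ^2)^2 * (∑ u ∈ Sᶜ, q u * φ u ^2)) ≤
      2 * (∑ u ∈ S, ∑ v ∈ Sᶜ, w u v * φ u * φ v) /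
        min (∑ u ∈ S, q u * φ u ^2) (∑ u ∈ Sᶜ, q u * φ u ^2) := by
  set a := ∑ u ∈ S, q u * φ u ^ 2
  set b := ∑ u ∈ Sᶜ, q u * φ u ^ 2
  set E := ∑ u ∈ S, ∑ v ∈ Sᶜ, w u v * φ u * φ v
  have hx : ∀ u ∈ S, g u = b := fun u hu => by simp [hg, hu]
  have hy : ∀ u ∉ S, g u = -a := fun u hu => by simp [hg, hu]
  have hqφ : ∀ u, 0 < q u * φ u ^ 2 := fun u => by have := hq u; have := hφ u; positivity
  have ha : 0 < a := sum_pos (fun u _ => hqφ u) hS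
  have hb : 0 < b := sum_pos (fun u _ => hqφ u) (by rwa [← compl_ne_univ_iff_nonempty, compl_compl])
  have hE : 0 ≤ E := sum_nonneg fun u _ => sum_nonneg fun v _ =>
    mul_nonneg (mul_nonneg (hwpos u v) (hφ u).le) (hφ v).le
  have weighted : ∀ k : ℕ, ∑ u, q u * g u ^ k * φ u ^ 2 = b ^ k * a + (-a) ^ k * b := fun k => by
    rw [sum_of_eq_on_compl S hx hy fun u t => q u * t ^ k * φ u ^ 2]
    simp only [mul_assoc, mul_left_comm (q _), ← mul_sum]
    rfl
  have energy := sum_sum_mul_sub_sq_of_eq_on_compl S hx hy (fun u v => w u v * φ u * φ v)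
    fun u v => by rw [hw]; ring
  refine ⟨by simpa [mul_comm a b] using weighted 1, ?_, mul_sq_add_div_le_two_mul_div_min ha hb hE⟩
  rw [energy, weighted 2]
  ring
end

section
/- Lower bound on eigenvalues via the potential (Corollary to Lemma on potentials): Let φ : V → ℝ satisfy (λ − W(u)) q(u) φ(u) = Σ_{v~u} w(u,v)[φ(u) − φ(v)] with w ≥ 0 and q > 0, and let S = {u ∈ V : φ(u) ≥ 0} with both S and V∖S restricted so that the relevant sums are nonzero. Then λ ≥ max over S' ∈ {S, V∖S} with Σ_{u∈S'} q(u)φ(u)² > 0 of [Σ_{u∈S'} W(u) q(u) φ(u)²] / [Σ_{u∈S'} q(u) φ(u)²]. -/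
/-!
Multiply the eigen-equation by `φ u` and sum over `u ∈ S'`. The left side becomes
`λ ∑ q φ² - ∑ W q φ²`; the right side splits into edges inside `S'`, whose contribution is
half the Dirichlet energy `∑ w (φ u - φ v)²` of `S'` by symmetry of `w`, and edges leaving `S'`,
whose terms `w (φ u² - φ u φ v)` are nonnegative because `φ` has opposite signs at their ends.
-/

open Finset

def SignSeparates {V : Type*} (φ : V → ℝ) (s : Finset V) : Prop :=
  ∀ u ∈ s, ∀ v ∉ s, φ u * φ v ≤ 0

theorem signSeparates_filter_nonneg {V : Type*} [Fintype V] (φ : V → ℝ) :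
    SignSeparates φ (univ.filter fun u => 0 ≤ φ u) := by
  intro u hu v hv
  simp only [mem_filter, mem_univ, true_and, not_le] at hu hv
  exact mul_nonpos_of_nonneg_of_nonpos hu hv.le

theorem SignSeparates.compl {V : Type*} [Fintype V] [DecidableEq V] {φ : V → ℝ} {s : Finset V}
    (h : SignSeparates φ s) : SignSeparates φ sᶜ := by
  intro u hu v hv
  rw [mem_compl] at hu
  rw [notMem_compl] at hv
  rw [mul_comm]
  exact h v hv u hu

theorem sum_sum_mul_mul_sub_nonneg {V : Type*} (s : Finset V) {w : V → V → ℝ}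
    (hw : ∀ u v, w u v = w v u) (hwpos : ∀ u v, 0 ≤ w u v) (φ : V → ℝ) :
    0 ≤ ∑ u ∈ s, ∑ v ∈ s, w u v * φ u * (φ u - φ v) := by
  have hdouble : 2 * ∑ u ∈ s, ∑ v ∈ s, w u v * φ u * (φ u - φ v)
      = ∑ u ∈ s, ∑ v ∈ s, w u v * (φ u - φ v) ^ 2 := by
    rw [two_mul]
    nth_rewrite 2 [sum_comm]
    simp only [← sum_add_distrib]
    refine sum_congr rfl fun u _ => sum_congr rfl fun v _ => ?_
    rw [hw v u]
    ring
  have henergy : 0 ≤ ∑ u ∈ s, ∑ v ∈ s, w u v * (φ u - φ v) ^ 2 :=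
    sum_nonneg fun u _ => sum_nonneg fun v _ => mul_nonneg (hwpos u v) (sq_nonneg _)
  linarith

theorem sum_sum_compl_mul_mul_sub_nonneg {V : Type*} [Fintype V] [DecidableEq V]
    {s : Finset V} {w : V → V → ℝ} (hwpos : ∀ u v, 0 ≤ w u v) {φ : V → ℝ}
    (hφ : SignSeparates φ s) :
    0 ≤ ∑ u ∈ s, ∑ v ∈ sᶜ, w u v * φ u * (φ u - φ v) := by
  refine sum_nonneg fun u hu => sum_nonneg fun v hv => ?_
  have hsign := hφ u hu v (mem_compl.mp hv)
  rw [mul_assoc, mul_sub, ← sq]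
  exact mul_nonneg (hwpos u v) (by nlinarith [sq_nonneg (φ u)])

theorem sum_mul_laplacian_nonneg {V : Type*} [Fintype V] [DecidableEq V]
    {w : V → V → ℝ} (hw : ∀ u v, w u v = w v u) (hwpos : ∀ u v, 0 ≤ w u v)
    {φ : V → ℝ} {s : Finset V} (hφ : SignSeparates φ s) :
    0 ≤ ∑ u ∈ s, φ u * ∑ v, w u v * (φ u - φ v) := by
  have hsplit : ∑ u ∈ s, φ u * ∑ v, w u v * (φ u - φ v)
      = ∑ u ∈ s, ∑ v ∈ s, w u v * φ u * (φ u - φ v)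
        + ∑ u ∈ s, ∑ v ∈ sᶜ, w u v * φ u * (φ u - φ v) := by
    rw [← sum_add_distrib]
    refine sum_congr rfl fun u _ => ?_
    rw [sum_add_sum_compl, mul_sum]
    exact sum_congr rfl fun v _ => by ring
  rw [hsplit]
  exact add_nonneg (sum_sum_mul_mul_sub_nonneg s hw hwpos φ)
    (sum_sum_compl_mul_mul_sub_nonneg hwpos hφ)

theorem sum_potential_le_of_eigen {V : Type*} [Fintype V] [DecidableEq V]
    {w : V → V → ℝ} (hw : ∀ u v, w u v = w v u) (hwpos : ∀ u v, 0 ≤ w u v)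
    {q W φ : V → ℝ} {lam : ℝ}
    (heig : ∀ u, (lam - W u) * q u * φ u = ∑ v, w u v * (φ u - φ v))
    {s : Finset V} (hφ : SignSeparates φ s) :
    ∑ u ∈ s, W u * q u * φ u ^ 2 ≤ lam * ∑ u ∈ s, q u * φ u ^ 2 := by
  have hgap : lam * ∑ u ∈ s, q u * φ u ^ 2 - ∑ u ∈ s, W u * q u * φ u ^ 2
      = ∑ u ∈ s, φ u * ∑ v, w u v * (φ u - φ v) := by
    rw [mul_sum, ← sum_sub_distrib]
    refine sum_congr rfl fun u _ => ?_
    rw [← heig u]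
    ring
  linarith [sum_mul_laplacian_nonneg hw hwpos hφ]

theorem statement10_general {V : Type*} [Fintype V] [DecidableEq V]
    (w : V → V → ℝ) (hw : ∀ u v, w u v = w v u) (hwpos : ∀ u v, 0 ≤ w u v)
    (q : V → ℝ) (W : V → ℝ) (lam : ℝ) (φ : V → ℝ)
    (heig : ∀ u, (lam - W u) * q u * φ u = ∑ v, w u v * (φ u - φ v))
    (S : Finset V) (hS : S = Finset.univ.filter (fun u => 0 ≤ φ u)) :
    ∀ S' : Finset V, (S' = S ∨ S' = Sᶜ) → 0 < ∑ u ∈ S', q u * φ u ^2 →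
      (∑ u ∈ S', W u * q u * φ u ^2) / (∑ u ∈ S', q u * φ u ^2) ≤ lam := by
  intro S' hS' hpos
  have hsep : SignSeparates φ S' := by
    have hS_sep : SignSeparates φ S := hS ▸ signSeparates_filter_nonneg φ
    rcases hS' with rfl | rfl
    · exact hS_sep
    · exact hS_sep.compl
  rw [div_le_iff₀ hpos]
  exact sum_potential_le_of_eigen hw hwpos heig hsep

theorem statement10 {V : Type*} [Fintype V] [DecidableEq V]
    (w : V → V → ℝ) (hw : ∀ u v, w u v = w v u) (hwpos : ∀ u v, 0 ≤ w u v)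
    (q : V → ℝ) (hq : ∀ u, 0 < q u) (W : V → ℝ) (lam : ℝ) (φ : V → ℝ) (hφ : φ ≠ 0)
    (heig : ∀ u, (lam - W u) * q u * φ u = ∑ v, w u v * (φ u - φ v))
    (S : Finset V) (hS : S = Finset.univ.filter (fun u => 0 ≤ φ u)) :
    ∀ S' : Finset V, (S' = S ∨ S' = Sᶜ) → 0 < ∑ u ∈ S', q u * φ u ^2 →
      (∑ u ∈ S', W u * q u * φ u ^2) / (∑ u ∈ S', q u * φ u ^2) ≤ lam :=
  statement10_general w hw hwpos q W lam φ heig S hS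
end

section
/- Dirichlet eigenvalue comparison for a sign region: Suppose φ : V → ℝ satisfies (λ − W(u)) q(u) φ(u) = Σ_v w(u,v)[φ(u) − φ(v)] with w ≥ 0, q > 0, and let S' ⊆ V be such that φ is nonnegative on S' and nonpositive on V∖S' (or vice versa), with Σ_{u∈S'} q(u)φ(u)² > 0. Then λ ≥ λ₀^D(S') + [Σ_{u∈S'} W(u)q(u)φ(u)²]/[Σ_{u∈S'} q(u)φ(u)²], where λ₀^D(S') = inf over f : V → ℝ vanishing outside S', f not identically zero, of [Σ_{{u,v}} w(u,v)(f(u)−f(v))²]/[Σ_{u∈S'} q(u) f(u)²]. -/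
/-!
Truncate the eigenfunction to `S'`: `g = 1_{S'} φ` is an admissible test function with
`∑_{S'} q g² = ∑_{S'} q φ²`. Writing the Dirichlet energy of `g` as `∑_u g(u) ∑_v w(u,v)(g(u) - g(v))`,
replacing `g` by `φ` inside the inner difference can only increase it, because the only changed
terms are `-w(u,v) φ(u) φ(v)` with `u ∈ S'`, `v ∉ S'`, which are nonnegative by the sign condition.
The eigenvalue equation evaluates the result as `∑_{S'} (λ - W) q φ²`, and dividing by
`∑_{S'} q φ²` gives the bound.
-/

open Finset

section

variable {V : Type*} [Fintype V]

noncomputable def dirichletEnergy (w : V → V → ℝ) (f : V → ℝ) : ℝ :=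
  (1/2) * ∑ u, ∑ v, w u v * (f u - f v) ^ 2

noncomputable def lowestDirichletEigenvalue (w : V → V → ℝ) (q : V → ℝ) (S : Finset V) : ℝ :=
  sInf {r : ℝ | ∃ f : V → ℝ, (∀ u ∉ S, f u = 0) ∧ f ≠ 0 ∧
    r = ((1/2) * ∑ u, ∑ v, w u v * (f u - f v) ^ 2) / (∑ u ∈ S, q u * f u ^ 2)}

theorem dirichletEnergy_eq_sum_mul_sub {w : V → V → ℝ} (hw : ∀ u v, w u v = w v u)
    (f : V → ℝ) : dirichletEnergy w f = ∑ u, ∑ v, w u v * (f u * (f u - f v)) := by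
  have hswap : ∑ u, ∑ v, w u v * (f u * (f u - f v)) =
      ∑ u, ∑ v, w u v * (-f v * (f u - f v)) := by
    rw [sum_comm]
    exact sum_congr rfl fun u _ => sum_congr rfl fun v _ => by rw [hw]; ring
  have hadd : ∑ u, ∑ v, w u v * (f u * (f u - f v)) +
      ∑ u, ∑ v, w u v * (-f v * (f u - f v)) = ∑ u, ∑ v, w u v * (f u - f v) ^ 2 := by
    simp only [← sum_add_distrib]
    exact sum_congr rfl fun u _ => sum_congr rfl fun v _ => by ring
  rw [dirichletEnergy]
  linarith

theorem lowestDirichletEigenvalue_le {w : V → V → ℝ} (hw : ∀ u v, 0 ≤ w u v)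
    {q : V → ℝ} (hq : ∀ u, 0 ≤ q u) {S : Finset V} {f : V → ℝ} (hfS : ∀ u ∉ S, f u = 0)
    (hf : f ≠ 0) :
    lowestDirichletEigenvalue w q S ≤ dirichletEnergy w f / ∑ u ∈ S, q u * f u ^ 2 := by
  refine csInf_le ⟨0, ?_⟩ ⟨f, hfS, hf, rfl⟩
  rintro r ⟨h, -, -, rfl⟩
  refine div_nonneg (mul_nonneg (by norm_num) ?_) (sum_nonneg fun u _ => ?_)
  · exact sum_nonneg fun u _ => sum_nonneg fun v _ => mul_nonneg (hw u v) (sq_nonneg _)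
  · exact mul_nonneg (hq u) (sq_nonneg _)

theorem sum_indicator_mul_sub_le {w : V → V → ℝ} (hw : ∀ u v, 0 ≤ w u v) {S : Set V}
    {φ : V → ℝ} (hsign : ∀ u ∈ S, ∀ v ∉ S, φ u * φ v ≤ 0) :
    ∑ u, ∑ v, w u v * (S.indicator φ u * (S.indicator φ u - S.indicator φ v)) ≤
      ∑ u, S.indicator φ u * ∑ v, w u v * (φ u - φ v) := by
  refine sum_le_sum fun u _ => ?_
  rw [mul_sum]
  refine sum_le_sum fun v _ => ?_
  by_cases hu : u ∈ S
  · by_cases hv : v ∈ S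
    · simp only [Set.indicator_of_mem hu, Set.indicator_of_mem hv]
      exact le_of_eq (by ring)
    · simp only [Set.indicator_of_mem hu, Set.indicator_of_notMem hv]
      nlinarith [mul_nonneg (hw u v) (neg_nonneg.2 (hsign u hu v hv))]
  · simp [Set.indicator_of_notMem hu]

end

theorem statement11 {V : Type*} [Fintype V] [DecidableEq V]
    (w : V → V → ℝ) (hw : ∀ u v, w u v = w v u) (hwpos : ∀ u v, 0 ≤ w u v)
    (q : V → ℝ) (hq : ∀ u, 0 < q u) (W : V → ℝ) (lam : ℝ) (φ : V → ℝ)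
    (heig : ∀ u, (lam - W u) * q u * φ u = ∑ v, w u v * (φ u - φ v))
    (S' : Finset V)
    (hsign : (∀ u ∈ S', 0 ≤ φ u) ∧ (∀ u ∈ S'ᶜ, φ u ≤ 0) ∨
             (∀ u ∈ S', φ u ≤ 0) ∧ (∀ u ∈ S'ᶜ, 0 ≤ φ u))
    (hpos : 0 < ∑ u ∈ S', q u * φ u ^2)
    (lamD : ℝ)
    (hlamD : lamD = sInf {r : ℝ | ∃ f : V → ℝ, (∀ u ∉ S', f u = 0) ∧ f ≠ 0 ∧
      r = ((1/2) * ∑ u, ∑ v, w u v * (f u - f v)^2) / (∑ u ∈ S', q u * f u ^2)}) :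
    lamD + (∑ u ∈ S', W u * q u * φ u ^2) / (∑ u ∈ S', q u * φ u ^2) ≤ lam := by
  set A := ∑ u ∈ S', q u * φ u ^ 2
  set g := (S' : Set V).indicator φ
  have hsign' : ∀ u ∈ (S' : Set V), ∀ v ∉ (S' : Set V), φ u * φ v ≤ 0 := by
    intro u hu v hv
    have hv' : v ∈ S'ᶜ := by simpa using hv
    rcases hsign with ⟨h1, h2⟩ | ⟨h1, h2⟩
    · exact mul_nonpos_of_nonneg_of_nonpos (h1 u hu) (h2 v hv')
    · exact mul_nonpos_of_nonpos_of_nonneg (h1 u hu) (h2 v hv')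
  have hgA : ∑ u ∈ S', q u * g u ^ 2 = A :=
    sum_congr rfl fun u hu => by simp [g, Set.indicator_of_mem (mem_coe.2 hu)]
  have hg0 : g ≠ 0 := fun h => by simp [h, ← hgA] at hpos
  have henergy : dirichletEnergy w g ≤ lam * A - ∑ u ∈ S', W u * q u * φ u ^ 2 :=
    calc dirichletEnergy w g = ∑ u, ∑ v, w u v * (g u * (g u - g v)) :=
          dirichletEnergy_eq_sum_mul_sub hw g
      _ ≤ ∑ u, g u * ∑ v, w u v * (φ u - φ v) := sum_indicator_mul_sub_le hwpos hsign'
      _ = ∑ u ∈ S', (lam - W u) * q u * φ u ^ 2 := by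
          simp only [← heig, g, Set.indicator_apply, mem_coe, ite_mul, zero_mul,
            sum_ite_mem, univ_inter]
          exact sum_congr rfl fun u _ => by ring
      _ = lam * A - ∑ u ∈ S', W u * q u * φ u ^ 2 := by
          rw [mul_sum, ← sum_sub_distrib]
          exact sum_congr rfl fun u _ => by ring
  have hlamD_le : lamD ≤ dirichletEnergy w g / A := by
    rw [hlamD, ← hgA]
    exact lowestDirichletEigenvalue_le hwpos (fun u => (hq u).le) (fun u hu => by simp [g, hu]) hg0
  have hquot : dirichletEnergy w g / A ≤ lam - (∑ u ∈ S', W u * q u * φ u ^ 2) / A := by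
    rw [div_le_iff₀ hpos, sub_mul, div_mul_cancel₀ _ hpos.ne']
    exact henergy
  linarith
end

section
/- Subgraph bottleneck bound: Let H be a stoquastic Hamiltonian on a graph G with strictly positive ground-state φ and ground-state energy λ₀, and let S ⊂ V. Then h_S ≥ λ₀^D(S) − λ₀, where h_S = |∂S| / min(vol(S), vol(V∖S)), |∂S| = Σ_{u∈S, v∉S} w(u,v)φ(u)φ(v), vol(A) = Σ_{u∈A} q(u)φ(u)², and λ₀^D(S) is the lowest Dirichlet eigenvalue of S (the infimum of the Dirichlet Rayleigh quotient over functions supported on S). -/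
/-!
Test the Dirichlet Rayleigh quotient of `S` on the ground state cut off to `S`, `f = 𝟙_S φ`.
By Green's identity its kinetic energy is `Σ_u f(u) (Lf)(u)`, where
`(Lf)(u) = Σ_v w(u,v) (f(u) - f(v))`; on `S` the function `Lf` differs from `Lφ = (λ₀ - W) q φ`
only through the edges leaving `S`, so the quotient equals
`λ₀ + |∂S| / vol(S)`. Hence `λ₀^D(S) - λ₀ ≤ |∂S| / vol(S)`, and `vol(S)` is the minimum.
-/

open Finset

noncomputable section

namespace StoquasticBottleneck

variable {V : Type*} [Fintype V] (w : V → V → ℝ)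

def dirichletEnergy (f : V → ℝ) : ℝ :=
  (1/2) * ∑ u, ∑ v, w u v * (f u - f v) ^ 2

def dirichletRayleigh (q W : V → ℝ) (S : Finset V) (f : V → ℝ) : ℝ :=
  (dirichletEnergy w f + ∑ u ∈ S, q u * W u * f u ^ 2) / ∑ u ∈ S, q u * f u ^ 2

/-- The quotients whose infimum is `λ₀^D(S)`. -/
def dirichletRayleighSet (q W : V → ℝ) (S : Finset V) : Set ℝ :=
  {r | ∃ f : V → ℝ, (∀ u ∉ S, f u = 0) ∧ f ≠ 0 ∧ r = dirichletRayleigh w q W S f}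

theorem sum_mul_laplacian_eq_dirichletEnergy (hw : ∀ u v, w u v = w v u) (f : V → ℝ) :
    ∑ u, f u * ∑ v, w u v * (f u - f v) = dirichletEnergy w f := by
  have hswap : ∑ u, ∑ v, w u v * f u * (f u - f v) = ∑ u, ∑ v, -(w u v * f v * (f u - f v)) := by
    rw [sum_comm]
    exact sum_congr rfl fun u _ => sum_congr rfl fun v _ => by rw [hw]; ring
  have hsplit : ∑ u, ∑ v, w u v * (f u - f v) ^ 2
      = ∑ u, ∑ v, w u v * f u * (f u - f v) + ∑ u, ∑ v, -(w u v * f v * (f u - f v)) := by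
    simp only [← sum_add_distrib]
    exact sum_congr rfl fun u _ => sum_congr rfl fun v _ => by ring
  have hlhs : ∑ u, f u * ∑ v, w u v * (f u - f v) = ∑ u, ∑ v, w u v * f u * (f u - f v) :=
    sum_congr rfl fun u _ => by rw [mul_sum]; exact sum_congr rfl fun v _ => by ring
  rw [dirichletEnergy, hsplit, ← hswap, hlhs]
  ring

theorem bddBelow_dirichletRayleighSet (hwpos : ∀ u v, 0 ≤ w u v) {q : V → ℝ} (hq : ∀ u, 0 < q u)
    (W : V → ℝ) {S : Finset V} (hS : S.Nonempty) :
    BddBelow (dirichletRayleighSet w q W S) := by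
  refine ⟨S.inf' hS W, ?_⟩
  rintro r ⟨f, hf_out, hf_ne, rfl⟩
  obtain ⟨u, hu⟩ := Function.ne_iff.1 hf_ne
  have huS : u ∈ S := by_contra fun h => hu (hf_out u h)
  have hden : 0 < ∑ u ∈ S, q u * f u ^ 2 :=
    sum_pos' (fun v _ => mul_nonneg (hq v).le (sq_nonneg _))
      ⟨u, huS, mul_pos (hq u) (sq_pos_of_ne_zero hu)⟩
  have henergy : 0 ≤ dirichletEnergy w f := by
    refine mul_nonneg (by norm_num) (sum_nonneg fun u _ => sum_nonneg fun v _ => ?_)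
    exact mul_nonneg (hwpos u v) (sq_nonneg _)
  have hpot : S.inf' hS W * ∑ u ∈ S, q u * f u ^ 2 ≤ ∑ u ∈ S, q u * W u * f u ^ 2 := by
    rw [mul_sum]
    refine sum_le_sum fun v hv => ?_
    have := mul_le_mul_of_nonneg_right (inf'_le W hv) (mul_nonneg (hq v).le (sq_nonneg (f v)))
    linarith
  rw [dirichletRayleigh, le_div_iff₀ hden]
  linarith

variable [DecidableEq V]

theorem sum_indicator_mul_laplacian (φ : V → ℝ) (S : Finset V) :
    let f := (S : Set V).indicator φ
    ∑ u, f u * ∑ v, w u v * (f u - f v)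
      = ∑ u ∈ S, φ u * ∑ v, w u v * (φ u - φ v) + ∑ u ∈ S, ∑ v ∈ Sᶜ, w u v * φ u * φ v := by
  intro f
  have hf_in : ∀ u ∈ S, f u = φ u := fun u hu => Set.indicator_of_mem (mem_coe.2 hu) φ
  have hf_out : ∀ u ∈ Sᶜ, f u = 0 := fun u hu =>
    Set.indicator_of_notMem (by simpa using hu) φ
  have hcompl : ∑ u ∈ Sᶜ, f u * ∑ v, w u v * (f u - f v) = 0 :=
    sum_eq_zero fun u hu => by rw [hf_out u hu, zero_mul]
  rw [← sum_add_sum_compl S, hcompl, add_zero, ← sum_add_distrib]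
  refine sum_congr rfl fun u hu => ?_
  have hdiff : ∑ v, w u v * (φ v - f v) = ∑ v ∈ Sᶜ, w u v * φ v := by
    rw [← sum_add_sum_compl S, sum_eq_zero (fun v hv => by rw [hf_in v hv, sub_self, mul_zero]),
      zero_add]
    exact sum_congr rfl fun v hv => by rw [hf_out v hv, sub_zero]
  calc f u * ∑ v, w u v * (f u - f v)
      = φ u * ∑ v, w u v * (φ u - φ v) + φ u * ∑ v, w u v * (φ v - f v) := by
        rw [hf_in u hu, ← mul_add, ← sum_add_distrib]
        exact congrArg _ (sum_congr rfl fun v _ => by ring)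
    _ = _ := by
        rw [hdiff]
        congr 1
        rw [mul_sum]
        exact sum_congr rfl fun v _ => by ring

theorem dirichletRayleigh_indicator_groundState (hw : ∀ u v, w u v = w v u) {q W φ : V → ℝ}
    {lam0 : ℝ} (heig : ∀ u, (lam0 - W u) * q u * φ u = ∑ v, w u v * (φ u - φ v))
    {S : Finset V} (hvol : ∑ u ∈ S, q u * φ u ^ 2 ≠ 0) :
    dirichletRayleigh w q W S ((S : Set V).indicator φ)
      = lam0 + (∑ u ∈ S, ∑ v ∈ Sᶜ, w u v * φ u * φ v) / ∑ u ∈ S, q u * φ u ^ 2 := by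
  have hf_in : ∀ u ∈ S, (S : Set V).indicator φ u = φ u := fun u hu =>
    Set.indicator_of_mem (mem_coe.2 hu) φ
  have hground : ∑ u ∈ S, φ u * ∑ v, w u v * (φ u - φ v)
      = lam0 * ∑ u ∈ S, q u * φ u ^ 2 - ∑ u ∈ S, q u * W u * φ u ^ 2 := by
    rw [mul_sum, ← sum_sub_distrib]
    exact sum_congr rfl fun u _ => by rw [← heig]; ring
  have hpot : ∑ u ∈ S, q u * W u * (S : Set V).indicator φ u ^ 2 = ∑ u ∈ S, q u * W u * φ u ^ 2 :=
    sum_congr rfl fun u hu => by rw [hf_in u hu]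
  have hden : ∑ u ∈ S, q u * (S : Set V).indicator φ u ^ 2 = ∑ u ∈ S, q u * φ u ^ 2 :=
    sum_congr rfl fun u hu => by rw [hf_in u hu]
  rw [dirichletRayleigh, ← sum_mul_laplacian_eq_dirichletEnergy w hw, sum_indicator_mul_laplacian,
    hground, hpot, hden]
  field_simp
  ring

end StoquasticBottleneck

end

open StoquasticBottleneck in
theorem statement12_general {V : Type*} [Fintype V] [DecidableEq V]
    (w : V → V → ℝ) (hw : ∀ u v, w u v = w v u) (hwpos : ∀ u v, 0 ≤ w u v)
    (q : V → ℝ) (hq : ∀ u, 0 < q u) (W : V → ℝ) (lam0 : ℝ) (φ : V → ℝ) (hφ : ∀ u, 0 < φ u)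
    (heig : ∀ u, (lam0 - W u) * q u * φ u = ∑ v, w u v * (φ u - φ v))
    (S : Finset V) (hSne : S.Nonempty)
    (hvol : ∑ u ∈ S, q u * φ u ^2 ≤ ∑ u ∈ Sᶜ, q u * φ u ^2)
    (lamD : ℝ)
    (hlamD : lamD = sInf {r : ℝ | ∃ f : V → ℝ, (∀ u ∉ S, f u = 0) ∧ f ≠ 0 ∧
      r = ((1/2) * ∑ u, ∑ v, w u v * (f u - f v)^2 + ∑ u ∈ S, q u * W u * f u ^2) /
        (∑ u ∈ S, q u * f u ^2)}) :
    lamD - lam0 ≤ (∑ u ∈ S, ∑ v ∈ Sᶜ, w u v * φ u * φ v) /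
      min (∑ u ∈ S, q u * φ u ^2) (∑ u ∈ Sᶜ, q u * φ u ^2) := by
  have hvolS : 0 < ∑ u ∈ S, q u * φ u ^ 2 :=
    sum_pos (fun u _ => mul_pos (hq u) (pow_pos (hφ u) 2)) hSne
  obtain ⟨u, hu⟩ := hSne
  have hf_ne : (S : Set V).indicator φ ≠ 0 := fun h => (hφ u).ne' <| by
    simpa [Set.indicator_of_mem (mem_coe.2 hu)] using congrFun h u
  have hmem : lam0 + (∑ u ∈ S, ∑ v ∈ Sᶜ, w u v * φ u * φ v) / ∑ u ∈ S, q u * φ u ^ 2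
      ∈ dirichletRayleighSet w q W S :=
    ⟨_, fun v hv => Set.indicator_of_notMem (by simpa using hv) φ, hf_ne,
      (dirichletRayleigh_indicator_groundState w hw heig hvolS.ne').symm⟩
  have hlam := csInf_le (bddBelow_dirichletRayleighSet w hwpos hq W ⟨u, hu⟩) hmem
  rw [min_eq_left hvol, hlamD]
  exact sub_le_iff_le_add'.2 hlam

theorem statement12 {V : Type*} [Fintype V] [DecidableEq V]
    (w : V → V → ℝ) (hw : ∀ u v, w u v = w v u) (hwpos : ∀ u v, 0 ≤ w u v)
    (q : V → ℝ) (hq : ∀ u, 0 < q u) (W : V → ℝ) (lam0 : ℝ) (φ : V → ℝ) (hφ : ∀ u, 0 < φ u)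
    (heig : ∀ u, (lam0 - W u) * q u * φ u = ∑ v, w u v * (φ u - φ v))
    (S : Finset V) (hSne : S.Nonempty) (hSproper : S ≠ Finset.univ)
    (hvol : ∑ u ∈ S, q u * φ u ^2 ≤ ∑ u ∈ Sᶜ, q u * φ u ^2)
    (lamD : ℝ)
    (hlamD : lamD = sInf {r : ℝ | ∃ f : V → ℝ, (∀ u ∉ S, f u = 0) ∧ f ≠ 0 ∧
      r = ((1/2) * ∑ u, ∑ v, w u v * (f u - f v)^2 + ∑ u ∈ S, q u * W u * f u ^2) /
        (∑ u ∈ S, q u * f u ^2)}) :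
    lamD - lam0 ≤ (∑ u ∈ S, ∑ v ∈ Sᶜ, w u v * φ u * φ v) /
      min (∑ u ∈ S, q u * φ u ^2) (∑ u ∈ Sᶜ, q u * φ u ^2) :=
  statement12_general w hw hwpos q hq W lam0 φ hφ heig S hSne hvol lamD hlamD
end
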